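/- Let (P, w, d) be weighted differential, let p ∈ P, and let a be a point that covers exactly p. Then w(p) ≤ 2·w(a). -/

import Mathlib

/-- A finite lower set of a poset: a finite set closed downward. -/
def IsFinLowerSet {P : Type*} [PartialOrder P] (I : Set P) : Prop :=
  I.Finite ∧ ∀ ⦃q p : P⦄, q ≤ p → p ∈ I → q ∈ I

/-- The insertion points of a set `I`: the points not in `I` all of whose
strict lower bounds lie in `I` (the minimal elements of the complement). -/
def insPts {P : Type*} [PartialOrder P] (I : Set P) : Set P :=
  {x | x ∉ I ∧ ∀ y : P, y < x → y ∈ I}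

/-- The deletion points of a set `I`: its maximal elements. -/
def delPts {P : Type*} [PartialOrder P] (I : Set P) : Set P :=
  {x | x ∈ I ∧ ∀ y ∈ I, ¬ x < y}

/-- `(P, w, d)` is weighted differential: every principal lower set is finite,
all weights are positive, `d` is positive, and for every finite lower set `I`
the set of insertion points is finite and the total weight of insertion points
equals the total weight of deletion points plus `d`. -/
def WeightedDifferential {P : Type*} [PartialOrder P] (w : P → ℤ) (d : ℤ) : Prop :=
  (∀ p : P, {q : P | q ≤ p}.Finite) ∧ (∀ p : P, 0 < w p) ∧ 0 < d ∧
    ∀ I : Set P, IsFinLowerSet I →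
      (insPts I).Finite ∧ (∑ᶠ x ∈ insPts I, w x) = (∑ᶠ x ∈ delPts I, w x) + d

/-- `a` covers exactly `p`: the set of lower covers of `a` is precisely `{p}`. -/
def CoversExactly {P : Type*} [PartialOrder P] (a p : P) : Prop :=
  {x : P | x ⋖ a} = {p}

/-!
Compare the differential identity at the principal lower sets `↓p` and `↓a`. Every lower cover
of `a` is `p` and `↓a` is finite, so everything strictly below `a` lies below `p`, i.e.
`↓a = ↓p ∪ {a}`. The deletion points of `↓p` and `↓a` are `p` and `a`, and adding `a` to `↓p`
removes the insertion point `a` while keeping every other one. Hence, with nonnegative weights,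
`w p + d = ∑ ins(↓p) ≤ w a + ∑ ins(↓a) = 2 w a + d`.
-/

open Set

theorem finsum_mem_le_finsum_mem_of_subset {α M : Type*} [AddCommMonoid M] [PartialOrder M]
    [IsOrderedAddMonoid M] {f : α → M} {s t : Set α} (hst : s ⊆ t) (ht : t.Finite)
    (hf : ∀ x ∈ t \ s, 0 ≤ f x) : ∑ᶠ x ∈ s, f x ≤ ∑ᶠ x ∈ t, f x := by
  rw [← finsum_mem_add_sdiff hst ht]
  exact le_add_of_nonneg_right (finsum_nonneg fun x ↦ finsum_nonneg (hf x))

section Poset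

variable {P : Type*} [PartialOrder P]

theorem exists_le_covBy_of_lt_of_finite_Iic {y a : P} (hfin : (Iic a).Finite) (hya : y < a) :
    ∃ z, y ≤ z ∧ z ⋖ a := by
  obtain ⟨z, hz⟩ := (hfin.subset fun z (hz : y ≤ z ∧ z < a) ↦ hz.2.le).exists_maximal
    ⟨y, le_rfl, hya⟩
  refine ⟨z, hz.prop.1, hz.prop.2, fun c hzc hca ↦ ?_⟩
  exact hzc.not_ge (hz.le_of_ge ⟨hz.prop.1.trans hzc.le, hca⟩ hzc.le)

theorem CoversExactly.covBy {a p : P} (ha : CoversExactly a p) : p ⋖ a :=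
  (Set.ext_iff.mp ha p).mpr rfl

theorem CoversExactly.le_of_lt {a p y : P} (ha : CoversExactly a p) (hfin : (Iic a).Finite)
    (hya : y < a) : y ≤ p := by
  obtain ⟨z, hyz, hza⟩ := exists_le_covBy_of_lt_of_finite_Iic hfin hya
  obtain rfl : z = p := (Set.ext_iff.mp ha z).mp hza
  exact hyz

theorem CoversExactly.Iic_eq_insert {a p : P} (ha : CoversExactly a p) (hfin : (Iic a).Finite) :
    Iic a = insert a (Iic p) := by
  ext y
  simp only [mem_Iic, mem_insert_iff]
  refine ⟨fun hya ↦ hya.eq_or_lt.imp id (ha.le_of_lt hfin), ?_⟩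
  rintro (rfl | hyp)
  exacts [le_rfl, hyp.trans ha.covBy.le]

theorem isFinLowerSet_Iic {p : P} (hfin : (Iic p).Finite) : IsFinLowerSet (Iic p) :=
  ⟨hfin, fun _ _ hqr hr ↦ le_trans hqr hr⟩

theorem delPts_Iic (p : P) : delPts (Iic p) = {p} := by
  ext x
  refine ⟨fun hx ↦ (hx.1 : x ≤ p).eq_of_not_lt (hx.2 p le_rfl), ?_⟩
  rintro rfl
  exact ⟨le_rfl, fun y hy ↦ (hy : y ≤ x).not_gt⟩

theorem insPts_subset_insert_insPts_insert (I : Set P) (a : P) :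
    insPts I ⊆ insert a (insPts (insert a I)) := by
  rintro x ⟨hxI, hbelow⟩
  by_cases hxa : x = a
  · exact .inl hxa
  · exact .inr ⟨by simp [hxa, hxI], fun y hy ↦ .inr (hbelow y hy)⟩

theorem notMem_insPts_insert (I : Set P) (a : P) : a ∉ insPts (insert a I) :=
  fun h ↦ h.1 (mem_insert a I)

end Poset

namespace WeightedDifferential

variable {P : Type*} [PartialOrder P] {w : P → ℤ} {d : ℤ}

theorem finite_Iic (h : WeightedDifferential w d) (p : P) : (Iic p).Finite := h.1 p

theorem finite_insPts_Iic (h : WeightedDifferential w d) (p : P) : (insPts (Iic p)).Finite :=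
  (h.2.2.2 _ (isFinLowerSet_Iic (h.finite_Iic p))).1

theorem finsum_insPts_Iic (h : WeightedDifferential w d) (p : P) :
    ∑ᶠ x ∈ insPts (Iic p), w x = w p + d := by
  rw [(h.2.2.2 _ (isFinLowerSet_Iic (h.finite_Iic p))).2, delPts_Iic, finsum_mem_singleton]

theorem finsum_insPts_le_add_finsum_insPts_insert (h : WeightedDifferential w d) (I : Set P)
    (a : P) (hfin : (insPts (insert a I)).Finite) :
    ∑ᶠ x ∈ insPts I, w x ≤ w a + ∑ᶠ x ∈ insPts (insert a I), w x := by
  rw [← finsum_mem_insert _ (notMem_insPts_insert I a) hfin]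
  exact finsum_mem_le_finsum_mem_of_subset (insPts_subset_insert_insPts_insert I a)
    (hfin.insert a) fun x _ ↦ (h.2.1 x).le

end WeightedDifferential

/-- In a weighted differential poset, if `a` covers exactly
`p`, then `w p ≤ 2 * w a`. -/
theorem weight_le_two_mul_of_covers_exactly {P : Type*} [PartialOrder P]
    (w : P → ℤ) (d : ℤ) (h : WeightedDifferential w d)
    (p a : P) (ha : CoversExactly a p) :
    w p ≤ 2 * w a := by
  have hIic : Iic a = insert a (Iic p) := ha.Iic_eq_insert (h.finite_Iic a)
  have key := h.finsum_insPts_le_add_finsum_insPts_insert (Iic p) a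
    (hIic ▸ h.finite_insPts_Iic a)
  rw [← hIic, h.finsum_insPts_Iic, h.finsum_insPts_Iic] at key
  linarith
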